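/- The sequent calculus for BD^{→,⊥} with axioms Id (A, Γ ⊢ Δ, A), ⊥-L, ¬⊥-R and rules Cut, ∧-L, ∧-R, ∨-L, ∨-R, →-L, →-R, ¬¬-L, ¬¬-R, ¬∧-L, ¬∧-R, ¬∨-L, ¬∨-R, ¬→-L, ¬→-R (as in Table 1 of the paper) is sound and complete with respect to the consequence relation of BD^{→,⊥}: for all sets Γ, Δ of formulas over ¬, ∧, ∨, →, ⊥, Γ ⊨ Δ iff there exist finite subsets Γ' ⊆ Γ and Δ' ⊆ Δ such that the sequent Γ' ⊢ Δ' is provable. -/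
import Mathlib


namespace BD18

/-- The four truth values of Belnap-Dunn logic:
`t` (true), `f` (false), `b` (both true and false), `n` (neither true nor false). -/
inductive V4 : Type
  | t | f | b | n
deriving DecidableEq, Repr

namespace V4

/-- `a` lies above truth in the Belnap-Dunn bilattice (i.e. `a ∈ {t, b}`). -/
def hasT : V4 → Bool
  | t => true
  | b => true
  | _ => false

/-- `a` lies above falsity in the Belnap-Dunn bilattice (i.e. `a ∈ {f, b}`). -/
def hasF : V4 → Bool
  | f => true
  | b => true
  | _ => false

def ofTF : Bool → Bool → V4
  | true, true => b
  | true, false => t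
  | false, true => f
  | false, false => n

/-- Interpretation of ¬: swaps `t` and `f`, fixes `b` and `n`. -/
def neg4 : V4 → V4
  | t => f
  | f => t
  | b => b
  | n => n

/-- Interpretation of ∧: greatest lower bound in the lattice order on `V4`
with `f` least, `t` greatest, `b` and `n` incomparable. -/
def and4 (x y : V4) : V4 := ofTF (x.hasT && y.hasT) (x.hasF || y.hasF)

/-- Interpretation of ∨: least upper bound in the lattice order on `V4`
with `f` least, `t` greatest, `b` and `n` incomparable. -/
def or4 (x y : V4) : V4 := ofTF (x.hasT || y.hasT) (x.hasF && y.hasF)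

/-- Interpretation of →: `a₁ → a₂ = t` if `a₁ ∉ {t, b}`, and `a₂` otherwise. -/
def imp4 (x y : V4) : V4 := if x = t ∨ x = b then y else t

/-- The designated truth values: `t` and `b`. -/
def desig (x : V4) : Prop := x = t ∨ x = b

end V4

/-- Formulas of BD^{→,⊥}, over the connectives ¬, ∧, ∨, →, ⊥. -/
inductive Fm : Type
  | var : ℕ → Fm
  | neg : Fm → Fm
  | and : Fm → Fm → Fm
  | or : Fm → Fm → Fm
  | imp : Fm → Fm → Fm
  | bot : Fm
deriving DecidableEq

/-- The valuation in the matrix `M^{BD,→,⊥}` determined by an assignment of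
truth values to the propositional variables. -/
def val (v : ℕ → V4) : Fm → V4
  | .var p => v p
  | .neg A => V4.neg4 (val v A)
  | .and A B => V4.and4 (val v A) (val v B)
  | .or A B => V4.or4 (val v A) (val v B)
  | .imp A B => V4.imp4 (val v A) (val v B)
  | .bot => V4.f

/-- The consequence relation of BD^{→,⊥}. -/
def Con (Γ Δ : Set Fm) : Prop :=
  ∀ v : ℕ → V4, (∀ A ∈ Γ, V4.desig (val v A)) → ∃ B ∈ Δ, V4.desig (val v B)

/-- Provability of sequents (with finite sets of formulas on both sides) in the
sequent calculus proof system for BD^{→,⊥} of Table 1 of the paper. -/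
inductive Provable : Finset Fm → Finset Fm → Prop
  | id (A : Fm) (Γ Δ : Finset Fm) :
      Provable (insert A Γ) (insert A Δ)
  | cut {Γ Γ' Δ Δ' : Finset Fm} {A : Fm} :
      Provable Γ (insert A Δ) → Provable (insert A Γ') Δ' →
      Provable (Γ' ∪ Γ) (Δ ∪ Δ')
  | andL {Γ Δ : Finset Fm} {A₁ A₂ : Fm} :
      Provable (insert A₁ (insert A₂ Γ)) Δ →
      Provable (insert (Fm.and A₁ A₂) Γ) Δ
  | andR {Γ Δ : Finset Fm} {A₁ A₂ : Fm} :
      Provable Γ (insert A₁ Δ) → Provable Γ (insert A₂ Δ) →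
      Provable Γ (insert (Fm.and A₁ A₂) Δ)
  | orL {Γ Δ : Finset Fm} {A₁ A₂ : Fm} :
      Provable (insert A₁ Γ) Δ → Provable (insert A₂ Γ) Δ →
      Provable (insert (Fm.or A₁ A₂) Γ) Δ
  | orR {Γ Δ : Finset Fm} {A₁ A₂ : Fm} :
      Provable Γ (insert A₁ (insert A₂ Δ)) →
      Provable Γ (insert (Fm.or A₁ A₂) Δ)
  | impL {Γ Δ : Finset Fm} {A₁ A₂ : Fm} :
      Provable Γ (insert A₁ Δ) → Provable (insert A₂ Γ) Δ →
      Provable (insert (Fm.imp A₁ A₂) Γ) Δ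
  | impR {Γ Δ : Finset Fm} {A₁ A₂ : Fm} :
      Provable (insert A₁ Γ) (insert A₂ Δ) →
      Provable Γ (insert (Fm.imp A₁ A₂) Δ)
  | botL (Γ Δ : Finset Fm) :
      Provable (insert Fm.bot Γ) Δ
  | negBotR (Γ Δ : Finset Fm) :
      Provable Γ (insert (Fm.neg Fm.bot) Δ)
  | negNegL {Γ Δ : Finset Fm} {A : Fm} :
      Provable (insert A Γ) Δ →
      Provable (insert (Fm.neg (Fm.neg A)) Γ) Δ
  | negNegR {Γ Δ : Finset Fm} {A : Fm} :
      Provable Γ (insert A Δ) →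
      Provable Γ (insert (Fm.neg (Fm.neg A)) Δ)
  | negAndL {Γ Δ : Finset Fm} {A₁ A₂ : Fm} :
      Provable (insert (Fm.neg A₁) Γ) Δ → Provable (insert (Fm.neg A₂) Γ) Δ →
      Provable (insert (Fm.neg (Fm.and A₁ A₂)) Γ) Δ
  | negAndR {Γ Δ : Finset Fm} {A₁ A₂ : Fm} :
      Provable Γ (insert (Fm.neg A₁) (insert (Fm.neg A₂) Δ)) →
      Provable Γ (insert (Fm.neg (Fm.and A₁ A₂)) Δ)
  | negOrL {Γ Δ : Finset Fm} {A₁ A₂ : Fm} :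
      Provable (insert (Fm.neg A₁) (insert (Fm.neg A₂) Γ)) Δ →
      Provable (insert (Fm.neg (Fm.or A₁ A₂)) Γ) Δ
  | negOrR {Γ Δ : Finset Fm} {A₁ A₂ : Fm} :
      Provable Γ (insert (Fm.neg A₁) Δ) → Provable Γ (insert (Fm.neg A₂) Δ) →
      Provable Γ (insert (Fm.neg (Fm.or A₁ A₂)) Δ)
  | negImpL {Γ Δ : Finset Fm} {A₁ A₂ : Fm} :
      Provable (insert A₁ (insert (Fm.neg A₂) Γ)) Δ →
      Provable (insert (Fm.neg (Fm.imp A₁ A₂)) Γ) Δ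
  | negImpR {Γ Δ : Finset Fm} {A₁ A₂ : Fm} :
      Provable Γ (insert A₁ Δ) → Provable Γ (insert (Fm.neg A₂) Δ) →
      Provable Γ (insert (Fm.neg (Fm.imp A₁ A₂)) Δ)


section Helpers
open V4

/-! ### Boolean designation function and its computation rules -/

def dsg (v : ℕ → V4) (A : Fm) : Bool := (val v A).hasT

lemma desig_iff (x : V4) : V4.desig x ↔ x.hasT = true := by
  cases x <;> simp [V4.desig, V4.hasT]

lemma hasT_ofTF (b1 b2 : Bool) : (V4.ofTF b1 b2).hasT = b1 := by
  cases b1 <;> cases b2 <;> rfl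

lemma hasF_ofTF (b1 b2 : Bool) : (V4.ofTF b1 b2).hasF = b2 := by
  cases b1 <;> cases b2 <;> rfl

lemma hasT_neg4 (x : V4) : (V4.neg4 x).hasT = x.hasF := by cases x <;> rfl

lemma dsg_var (v : ℕ → V4) (p : ℕ) : dsg v (Fm.var p) = (v p).hasT := rfl

lemma dsg_neg_var (v : ℕ → V4) (p : ℕ) : dsg v (Fm.neg (Fm.var p)) = (v p).hasF := by
  show (V4.neg4 (v p)).hasT = (v p).hasF
  exact hasT_neg4 _

lemma dsg_bot (v : ℕ → V4) : dsg v Fm.bot = false := rfl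

lemma dsg_neg_bot (v : ℕ → V4) : dsg v (Fm.neg Fm.bot) = true := rfl

lemma dsg_and (v : ℕ → V4) (A B : Fm) :
    dsg v (Fm.and A B) = (dsg v A && dsg v B) := by
  show (V4.and4 (val v A) (val v B)).hasT = ((val v A).hasT && (val v B).hasT)
  generalize val v A = x; generalize val v B = y
  cases x <;> cases y <;> decide

lemma dsg_or (v : ℕ → V4) (A B : Fm) :
    dsg v (Fm.or A B) = (dsg v A || dsg v B) := by
  show (V4.or4 (val v A) (val v B)).hasT = ((val v A).hasT || (val v B).hasT)
  generalize val v A = x; generalize val v B = y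
  cases x <;> cases y <;> decide

lemma dsg_imp (v : ℕ → V4) (A B : Fm) :
    dsg v (Fm.imp A B) = (!dsg v A || dsg v B) := by
  show (V4.imp4 (val v A) (val v B)).hasT = (!(val v A).hasT || (val v B).hasT)
  generalize val v A = x; generalize val v B = y
  cases x <;> cases y <;> decide

lemma dsg_neg_neg (v : ℕ → V4) (A : Fm) :
    dsg v (Fm.neg (Fm.neg A)) = dsg v A := by
  show (V4.neg4 (V4.neg4 (val v A))).hasT = (val v A).hasT
  generalize val v A = x
  cases x <;> decide

lemma dsg_neg_and (v : ℕ → V4) (A B : Fm) :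
    dsg v (Fm.neg (Fm.and A B)) = (dsg v (Fm.neg A) || dsg v (Fm.neg B)) := by
  show (V4.neg4 (V4.and4 (val v A) (val v B))).hasT
      = ((V4.neg4 (val v A)).hasT || (V4.neg4 (val v B)).hasT)
  generalize val v A = x; generalize val v B = y
  cases x <;> cases y <;> decide

lemma dsg_neg_or (v : ℕ → V4) (A B : Fm) :
    dsg v (Fm.neg (Fm.or A B)) = (dsg v (Fm.neg A) && dsg v (Fm.neg B)) := by
  show (V4.neg4 (V4.or4 (val v A) (val v B))).hasT
      = ((V4.neg4 (val v A)).hasT && (V4.neg4 (val v B)).hasT)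
  generalize val v A = x; generalize val v B = y
  cases x <;> cases y <;> decide

lemma dsg_neg_imp (v : ℕ → V4) (A B : Fm) :
    dsg v (Fm.neg (Fm.imp A B)) = (dsg v A && dsg v (Fm.neg B)) := by
  show (V4.neg4 (V4.imp4 (val v A) (val v B))).hasT
      = ((val v A).hasT && (V4.neg4 (val v B)).hasT)
  generalize val v A = x; generalize val v B = y
  cases x <;> cases y <;> decide

/-- Finitary, boolean version of the consequence relation. -/
def ConB (Γ Δ : Finset Fm) : Prop :=
  ∀ v : ℕ → V4, (∀ A ∈ Γ, dsg v A = true) → ∃ B ∈ Δ, dsg v B = true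

lemma con_coe (Γ Δ : Finset Fm) : Con ↑Γ ↑Δ ↔ ConB Γ Δ := by
  unfold Con ConB dsg
  simp only [Finset.mem_coe, desig_iff]

end Helpers

section Soundness

lemma sound : ∀ {Γ Δ : Finset Fm}, Provable Γ Δ → ConB Γ Δ := by
  intro Γ Δ h
  induction h with
  | id A Γ Δ =>
      intro v hv
      exact ⟨A, Finset.mem_insert_self _ _, hv A (Finset.mem_insert_self _ _)⟩
  | @cut Γ Γcut Δ Δcut A h1 h2 ih1 ih2 =>
      intro v hv
      obtain ⟨B, hB, hBd⟩ := ih1 v (fun A hA => hv A (Finset.mem_union_right _ hA))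
      rcases Finset.mem_insert.mp hB with rfl | hB'
      · have hsat : ∀ X ∈ insert B Γcut, dsg v X = true := by
          intro X hX
          rcases Finset.mem_insert.mp hX with rfl | hX'
          · exact hBd
          · exact hv X (Finset.mem_union_left _ hX')
        obtain ⟨C, hC, hCd⟩ := ih2 v hsat
        exact ⟨C, Finset.mem_union_right _ hC, hCd⟩
      · exact ⟨B, Finset.mem_union_left _ hB', hBd⟩
  | andL h ih =>
      intro v hv
      have := ih v
      simp only [Finset.forall_mem_insert, dsg_and, Bool.and_eq_true] at hv this
      exact this ⟨hv.1.1, hv.1.2, hv.2⟩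
  | andR h1 h2 ih1 ih2 =>
      intro v hv
      have t1 := ih1 v hv; have t2 := ih2 v hv
      simp only [Finset.exists_mem_insert, dsg_and, Bool.and_eq_true] at t1 t2 ⊢
      tauto
  | orL h1 h2 ih1 ih2 =>
      intro v hv
      have t1 := ih1 v; have t2 := ih2 v
      simp only [Finset.forall_mem_insert, dsg_or, Bool.or_eq_true] at hv t1 t2
      rcases hv.1 with h | h
      · exact t1 ⟨h, hv.2⟩
      · exact t2 ⟨h, hv.2⟩
  | orR h ih =>
      intro v hv
      have t := ih v hv
      simp only [Finset.exists_mem_insert, dsg_or, Bool.or_eq_true] at t ⊢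
      tauto
  | impL h1 h2 ih1 ih2 =>
      intro v hv
      have t1 := ih1 v; have t2 := ih2 v
      simp only [Finset.forall_mem_insert, Finset.exists_mem_insert, dsg_imp,
        Bool.or_eq_true, Bool.not_eq_true'] at hv t1 t2
      rcases hv.1 with h | h
      · rcases t1 hv.2 with h' | h'
        · rw [h] at h'; exact Bool.noConfusion h'
        · exact h'
      · exact t2 ⟨h, hv.2⟩
  | @impR Γ Δ A₁ A₂ h ih =>
      intro v hv
      have t := ih v
      simp only [Finset.forall_mem_insert, Finset.exists_mem_insert, dsg_imp,
        Bool.or_eq_true, Bool.not_eq_true'] at t ⊢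
      by_cases hA : dsg v A₁ = true
      · rcases t ⟨hA, hv⟩ with h | h
        · exact Or.inl (Or.inr h)
        · exact Or.inr h
      · exact Or.inl (Or.inl (by revert hA; cases dsg v A₁ <;> simp))
  | botL Γ Δ =>
      intro v hv
      have := hv Fm.bot (Finset.mem_insert_self _ _)
      rw [dsg_bot] at this
      exact Bool.noConfusion this
  | negBotR Γ Δ =>
      intro v _
      exact ⟨Fm.neg Fm.bot, Finset.mem_insert_self _ _, dsg_neg_bot v⟩
  | negNegL h ih =>
      intro v hv
      have := ih v
      simp only [Finset.forall_mem_insert, dsg_neg_neg] at hv this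
      exact this hv
  | negNegR h ih =>
      intro v hv
      have t := ih v hv
      simp only [Finset.exists_mem_insert, dsg_neg_neg] at t ⊢
      exact t
  | negAndL h1 h2 ih1 ih2 =>
      intro v hv
      have t1 := ih1 v; have t2 := ih2 v
      simp only [Finset.forall_mem_insert, dsg_neg_and, Bool.or_eq_true] at hv t1 t2
      rcases hv.1 with h | h
      · exact t1 ⟨h, hv.2⟩
      · exact t2 ⟨h, hv.2⟩
  | negAndR h ih =>
      intro v hv
      have t := ih v hv
      simp only [Finset.exists_mem_insert, dsg_neg_and, Bool.or_eq_true] at t ⊢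
      tauto
  | negOrL h ih =>
      intro v hv
      have := ih v
      simp only [Finset.forall_mem_insert, dsg_neg_or, Bool.and_eq_true] at hv this
      exact this ⟨hv.1.1, hv.1.2, hv.2⟩
  | negOrR h1 h2 ih1 ih2 =>
      intro v hv
      have t1 := ih1 v hv; have t2 := ih2 v hv
      simp only [Finset.exists_mem_insert, dsg_neg_or, Bool.and_eq_true] at t1 t2 ⊢
      tauto
  | negImpL h ih =>
      intro v hv
      have := ih v
      simp only [Finset.forall_mem_insert, dsg_neg_imp, Bool.and_eq_true] at hv this
      exact this ⟨hv.1.1, hv.1.2, hv.2⟩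
  | negImpR h1 h2 ih1 ih2 =>
      intro v hv
      have t1 := ih1 v hv; have t2 := ih2 v hv
      simp only [Finset.exists_mem_insert, dsg_neg_imp, Bool.and_eq_true] at t1 t2 ⊢
      tauto

end Soundness

section Completeness

/-- Atomic formulas for the proof search: variables, ⊥, and their negations. -/
def atomic : Fm → Bool
  | .var _ => true
  | .bot => true
  | .neg (.var _) => true
  | .neg .bot => true
  | _ => false

/-- Complexity measure on formulas. -/
def c : Fm → ℕ
  | .var _ => 1
  | .bot => 1
  | .neg A => c A + 1
  | .and A B => c A + c B + 2
  | .or A B => c A + c B + 2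
  | .imp A B => c A + c B + 2

lemma c_pos (A : Fm) : 1 ≤ c A := by cases A <;> simp [c]

lemma sum_insert_le (a : Fm) (s : Finset Fm) : (insert a s).sum c ≤ c a + s.sum c := by
  by_cases h : a ∈ s
  · rw [Finset.insert_eq_self.mpr h]; omega
  · rw [Finset.sum_insert h]

lemma sum_erase_add (a : Fm) (s : Finset Fm) (h : a ∈ s) :
    s.sum c = c a + (s.erase a).sum c := by
  rw [← Finset.sum_insert (Finset.notMem_erase a s), Finset.insert_erase h]

/-- Weight of a sequent. -/
def W (Γ Δ : Finset Fm) : ℕ := Γ.sum c + Δ.sum c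

lemma W_left2 {F B₁ B₂ : Fm} {Γ Δ : Finset Fm} (hF : F ∈ Γ) (hc : c B₁ + c B₂ < c F) :
    W (insert B₁ (insert B₂ (Γ.erase F))) Δ < W Γ Δ := by
  have h1 := sum_insert_le B₁ (insert B₂ (Γ.erase F))
  have h2 := sum_insert_le B₂ (Γ.erase F)
  have h3 := sum_erase_add F Γ hF
  unfold W; omega

lemma W_left1 {F B : Fm} {Γ Δ : Finset Fm} (hF : F ∈ Γ) (hc : c B < c F) :
    W (insert B (Γ.erase F)) Δ < W Γ Δ := by
  have h1 := sum_insert_le B (Γ.erase F)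
  have h3 := sum_erase_add F Γ hF
  unfold W; omega

lemma W_left0 {F : Fm} {Γ Δ : Finset Fm} (hF : F ∈ Γ) {B : Fm} (hc : c B < c F) :
    W (Γ.erase F) (insert B Δ) < W Γ Δ := by
  have h1 := sum_insert_le B Δ
  have h3 := sum_erase_add F Γ hF
  unfold W; omega

lemma W_right2 {F B₁ B₂ : Fm} {Γ Δ : Finset Fm} (hF : F ∈ Δ) (hc : c B₁ + c B₂ < c F) :
    W Γ (insert B₁ (insert B₂ (Δ.erase F))) < W Γ Δ := by
  have h1 := sum_insert_le B₁ (insert B₂ (Δ.erase F))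
  have h2 := sum_insert_le B₂ (Δ.erase F)
  have h3 := sum_erase_add F Δ hF
  unfold W; omega

lemma W_right1 {F B : Fm} {Γ Δ : Finset Fm} (hF : F ∈ Δ) (hc : c B < c F) :
    W Γ (insert B (Δ.erase F)) < W Γ Δ := by
  have h1 := sum_insert_le B (Δ.erase F)
  have h3 := sum_erase_add F Δ hF
  unfold W; omega

lemma W_right0 {F B₁ B₂ : Fm} {Γ Δ : Finset Fm} (hF : F ∈ Δ) (hc : c B₁ + c B₂ < c F) :
    W (insert B₁ Γ) (insert B₂ (Δ.erase F)) < W Γ Δ := by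
  have h1 := sum_insert_le B₁ Γ
  have h2 := sum_insert_le B₂ (Δ.erase F)
  have h3 := sum_erase_add F Δ hF
  unfold W; omega

/-! ### Invertibility (semantic) of the rules -/

lemma conb_left_mono {Γ Δ : Finset Fm} {F B : Fm}
    (hd : ∀ v, dsg v B = true → dsg v F = true)
    (h : ConB (insert F Γ) Δ) : ConB (insert B Γ) Δ := by
  intro v hv
  rw [Finset.forall_mem_insert] at hv
  exact h v (by rw [Finset.forall_mem_insert]; exact ⟨hd v hv.1, hv.2⟩)

lemma conb_left_mono2 {Γ Δ : Finset Fm} {F B₁ B₂ : Fm}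
    (hd : ∀ v, dsg v B₁ = true → dsg v B₂ = true → dsg v F = true)
    (h : ConB (insert F Γ) Δ) : ConB (insert B₁ (insert B₂ Γ)) Δ := by
  intro v hv
  rw [Finset.forall_mem_insert, Finset.forall_mem_insert] at hv
  exact h v (by rw [Finset.forall_mem_insert]; exact ⟨hd v hv.1 hv.2.1, hv.2.2⟩)

lemma conb_right_mono {Γ Δ : Finset Fm} {F B : Fm}
    (hd : ∀ v, dsg v F = true → dsg v B = true)
    (h : ConB Γ (insert F Δ)) : ConB Γ (insert B Δ) := by
  intro v hv
  have h' := h v hv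
  rw [Finset.exists_mem_insert] at h' ⊢
  rcases h' with h' | h'
  · exact Or.inl (hd v h')
  · exact Or.inr h'

lemma conb_right_mono2 {Γ Δ : Finset Fm} {F B₁ B₂ : Fm}
    (hd : ∀ v, dsg v F = true → dsg v B₁ = true ∨ dsg v B₂ = true)
    (h : ConB Γ (insert F Δ)) : ConB Γ (insert B₁ (insert B₂ Δ)) := by
  intro v hv
  have h' := h v hv
  rw [Finset.exists_mem_insert] at h'
  rw [Finset.exists_mem_insert, Finset.exists_mem_insert]
  rcases h' with h' | h'
  · rcases hd v h' with h'' | h''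
    · exact Or.inl h''
    · exact Or.inr (Or.inl h'')
  · exact Or.inr (Or.inr h')

lemma conb_impL1 {Γ Δ : Finset Fm} {A₁ A₂ : Fm}
    (h : ConB (insert (Fm.imp A₁ A₂) Γ) Δ) : ConB Γ (insert A₁ Δ) := by
  intro v hv
  rw [Finset.exists_mem_insert]
  by_cases hA : dsg v A₁ = true
  · exact Or.inl hA
  · refine Or.inr (h v ?_)
    rw [Finset.forall_mem_insert]
    refine ⟨?_, hv⟩
    rw [dsg_imp, Bool.or_eq_true, Bool.not_eq_true']
    left; revert hA; cases dsg v A₁ <;> simp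

lemma conb_impL2 {Γ Δ : Finset Fm} {A₁ A₂ : Fm}
    (h : ConB (insert (Fm.imp A₁ A₂) Γ) Δ) : ConB (insert A₂ Γ) Δ :=
  conb_left_mono (fun v h2 => by rw [dsg_imp, h2, Bool.or_true]) h

lemma conb_impR {Γ Δ : Finset Fm} {A₁ A₂ : Fm}
    (h : ConB Γ (insert (Fm.imp A₁ A₂) Δ)) :
    ConB (insert A₁ Γ) (insert A₂ Δ) := by
  intro v hv
  rw [Finset.forall_mem_insert] at hv
  have h' := h v hv.2
  rw [Finset.exists_mem_insert] at h' ⊢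
  rcases h' with h' | h'
  · rw [dsg_imp, hv.1, Bool.or_eq_true] at h'
    rcases h' with h' | h'
    · exact Bool.noConfusion h'
    · exact Or.inl h'
  · exact Or.inr h'

end Completeness

section MainCompleteness

lemma complete_aux : ∀ n Γ Δ, W Γ Δ ≤ n → ConB Γ Δ → Provable Γ Δ := by
  intro n
  induction n using Nat.strong_induction_on with
  | _ n ih =>
  intro Γ Δ hW hC
  have IH : ∀ Γ' Δ', W Γ' Δ' < W Γ Δ → ConB Γ' Δ' → Provable Γ' Δ' :=
    fun Γ' Δ' hlt hc => ih (W Γ' Δ') (Nat.lt_of_lt_of_le hlt hW) Γ' Δ' le_rfl hc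
  by_cases hL : ∃ F ∈ Γ, atomic F = false
  · obtain ⟨F, hF, hFa⟩ := hL
    have hins : insert F (Γ.erase F) = Γ := Finset.insert_erase hF
    have hCi : ConB (insert F (Γ.erase F)) Δ := by rw [hins]; exact hC
    rw [← hins]
    clear hins hC
    cases F with
    | var p => exact Bool.noConfusion hFa
    | bot => exact Provable.botL _ _
    | and A₁ A₂ =>
        exact Provable.andL (IH _ _ (W_left2 hF (by simp only [c]; omega))
          (conb_left_mono2 (fun v h1 h2 => by rw [dsg_and, h1, h2]; rfl) hCi))
    | or A₁ A₂ =>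
        exact Provable.orL
          (IH _ _ (W_left1 hF (by have := c_pos A₂; simp only [c]; omega))
            (conb_left_mono (fun v h1 => by rw [dsg_or, h1]; rfl) hCi))
          (IH _ _ (W_left1 hF (by have := c_pos A₁; simp only [c]; omega))
            (conb_left_mono (fun v h2 => by rw [dsg_or, h2, Bool.or_true]) hCi))
    | imp A₁ A₂ =>
        exact Provable.impL
          (IH _ _ (W_left0 hF (by have := c_pos A₂; simp only [c]; omega)) (conb_impL1 hCi))
          (IH _ _ (W_left1 hF (by have := c_pos A₁; simp only [c]; omega)) (conb_impL2 hCi))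
    | neg A =>
        cases A with
        | var p => exact Bool.noConfusion hFa
        | bot => exact Bool.noConfusion hFa
        | neg B =>
            exact Provable.negNegL (IH _ _ (W_left1 hF (by simp only [c]; omega))
              (conb_left_mono (fun v h1 => by rw [dsg_neg_neg]; exact h1) hCi))
        | and A₁ A₂ =>
            exact Provable.negAndL
              (IH _ _ (W_left1 hF (by have := c_pos A₂; simp only [c]; omega))
                (conb_left_mono (fun v h1 => by rw [dsg_neg_and, h1]; rfl) hCi))
              (IH _ _ (W_left1 hF (by have := c_pos A₁; simp only [c]; omega))
                (conb_left_mono (fun v h2 => by rw [dsg_neg_and, h2, Bool.or_true]) hCi))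
        | or A₁ A₂ =>
            exact Provable.negOrL (IH _ _ (W_left2 hF (by simp only [c]; omega))
              (conb_left_mono2 (fun v h1 h2 => by rw [dsg_neg_or, h1, h2]; rfl) hCi))
        | imp A₁ A₂ =>
            exact Provable.negImpL (IH _ _ (W_left2 hF (by simp only [c]; omega))
              (conb_left_mono2 (fun v h1 h2 => by rw [dsg_neg_imp, h1, h2]; rfl) hCi))
  · by_cases hR : ∃ F ∈ Δ, atomic F = false
    · obtain ⟨F, hF, hFa⟩ := hR
      have hins : insert F (Δ.erase F) = Δ := Finset.insert_erase hF
      have hCi : ConB Γ (insert F (Δ.erase F)) := by rw [hins]; exact hC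
      rw [← hins]
      clear hins hC
      cases F with
      | var p => exact Bool.noConfusion hFa
      | bot =>
          -- ⊥ is atomic, so this case is impossible
          exact Bool.noConfusion hFa
      | and A₁ A₂ =>
          exact Provable.andR
            (IH _ _ (W_right1 hF (by have := c_pos A₂; simp only [c]; omega))
              (conb_right_mono (fun v h1 => by rw [dsg_and, Bool.and_eq_true] at h1; exact h1.1) hCi))
            (IH _ _ (W_right1 hF (by have := c_pos A₁; simp only [c]; omega))
              (conb_right_mono (fun v h1 => by rw [dsg_and, Bool.and_eq_true] at h1; exact h1.2) hCi))
      | or A₁ A₂ =>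
          exact Provable.orR (IH _ _ (W_right2 hF (by simp only [c]; omega))
            (conb_right_mono2 (fun v h1 => by rwa [dsg_or, Bool.or_eq_true] at h1) hCi))
      | imp A₁ A₂ =>
          exact Provable.impR (IH _ _ (W_right0 hF (by simp only [c]; omega)) (conb_impR hCi))
      | neg A =>
          cases A with
          | var p => exact Bool.noConfusion hFa
          | bot => exact Bool.noConfusion hFa
          | neg B =>
              exact Provable.negNegR (IH _ _ (W_right1 hF (by simp only [c]; omega))
                (conb_right_mono (fun v h1 => by rwa [dsg_neg_neg] at h1) hCi))
          | and A₁ A₂ =>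
              exact Provable.negAndR (IH _ _ (W_right2 hF (by simp only [c]; omega))
                (conb_right_mono2 (fun v h1 => by rwa [dsg_neg_and, Bool.or_eq_true] at h1) hCi))
          | or A₁ A₂ =>
              exact Provable.negOrR
                (IH _ _ (W_right1 hF (by have := c_pos A₂; simp only [c]; omega))
                  (conb_right_mono (fun v h1 => by rw [dsg_neg_or, Bool.and_eq_true] at h1; exact h1.1) hCi))
                (IH _ _ (W_right1 hF (by have := c_pos A₁; simp only [c]; omega))
                  (conb_right_mono (fun v h1 => by rw [dsg_neg_or, Bool.and_eq_true] at h1; exact h1.2) hCi))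
          | imp A₁ A₂ =>
              exact Provable.negImpR
                (IH _ _ (W_right1 hF (by have := c_pos A₂; simp only [c]; omega))
                  (conb_right_mono (fun v h1 => by rw [dsg_neg_imp, Bool.and_eq_true] at h1; exact h1.1) hCi))
                (IH _ _ (W_right1 hF (by have := c_pos A₁; simp only [c]; omega))
                  (conb_right_mono (fun v h1 => by rw [dsg_neg_imp, Bool.and_eq_true] at h1; exact h1.2) hCi))
    · -- all formulas atomic
      have hL' : ∀ F ∈ Γ, atomic F = true := by
        intro F hFm
        by_contra hx
        exact hL ⟨F, hFm, by revert hx; cases atomic F <;> simp⟩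
      have hR' : ∀ F ∈ Δ, atomic F = true := by
        intro F hFm
        by_contra hx
        exact hR ⟨F, hFm, by revert hx; cases atomic F <;> simp⟩
      have key : (∃ A ∈ Γ, A ∈ Δ) ∨ Fm.bot ∈ Γ ∨ Fm.neg Fm.bot ∈ Δ := by
        by_contra hcon
        push_neg at hcon
        obtain ⟨hsep, hb, hnb⟩ := hcon
        classical
        set v : ℕ → V4 :=
          fun p => V4.ofTF (decide (Fm.var p ∈ Γ)) (decide (Fm.neg (Fm.var p) ∈ Γ)) with hvdef
        have hsat : ∀ A ∈ Γ, dsg v A = true := by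
          intro A hA
          have hAa := hL' A hA
          cases A with
          | var p =>
              rw [dsg_var, hvdef, hasT_ofTF]
              exact decide_eq_true hA
          | bot => exact absurd hA hb
          | and A₁ A₂ => exact Bool.noConfusion hAa
          | or A₁ A₂ => exact Bool.noConfusion hAa
          | imp A₁ A₂ => exact Bool.noConfusion hAa
          | neg B =>
              cases B with
              | var p =>
                  rw [dsg_neg_var, hvdef, hasF_ofTF]
                  exact decide_eq_true hA
              | bot => exact dsg_neg_bot v
              | neg B' => exact Bool.noConfusion hAa
              | and A₁ A₂ => exact Bool.noConfusion hAa
              | or A₁ A₂ => exact Bool.noConfusion hAa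
              | imp A₁ A₂ => exact Bool.noConfusion hAa
        obtain ⟨B, hB, hBd⟩ := hC v hsat
        have hBa := hR' B hB
        cases B with
        | var p =>
            rw [dsg_var, hvdef, hasT_ofTF] at hBd
            exact hsep (Fm.var p) (of_decide_eq_true hBd) hB
        | bot => exact Bool.noConfusion hBd
        | and A₁ A₂ => exact Bool.noConfusion hBa
        | or A₁ A₂ => exact Bool.noConfusion hBa
        | imp A₁ A₂ => exact Bool.noConfusion hBa
        | neg B' =>
            cases B' with
            | var p =>
                rw [dsg_neg_var, hvdef, hasF_ofTF] at hBd
                exact hsep (Fm.neg (Fm.var p)) (of_decide_eq_true hBd) hB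
            | bot => exact hnb hB
            | neg B'' => exact Bool.noConfusion hBa
            | and A₁ A₂ => exact Bool.noConfusion hBa
            | or A₁ A₂ => exact Bool.noConfusion hBa
            | imp A₁ A₂ => exact Bool.noConfusion hBa
      rcases key with ⟨A, hAG, hAD⟩ | hb | hnb
      · rw [← Finset.insert_erase hAG, ← Finset.insert_erase hAD]
        exact Provable.id A _ _
      · rw [← Finset.insert_erase hb]
        exact Provable.botL _ _
      · rw [← Finset.insert_erase hnb]
        exact Provable.negBotR _ _

end MainCompleteness

section Compactness

instance : Fintype V4 :=
  ⟨{V4.t, V4.f, V4.b, V4.n}, fun x => by cases x <;> decide⟩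

instance : TopologicalSpace V4 := ⊥

instance : DiscreteTopology V4 := ⟨rfl⟩

lemma cont_val (A : Fm) : Continuous (fun v : ℕ → V4 => val v A) := by
  induction A with
  | var p => exact continuous_apply p
  | neg A ihA =>
      exact (continuous_of_discreteTopology (f := V4.neg4)).comp ihA
  | and A B ihA ihB =>
      exact (continuous_of_discreteTopology
        (f := fun p : V4 × V4 => V4.and4 p.1 p.2)).comp (ihA.prodMk ihB)
  | or A B ihA ihB =>
      exact (continuous_of_discreteTopology
        (f := fun p : V4 × V4 => V4.or4 p.1 p.2)).comp (ihA.prodMk ihB)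
  | imp A B ihA ihB =>
      exact (continuous_of_discreteTopology
        (f := fun p : V4 × V4 => V4.imp4 p.1 p.2)).comp (ihA.prodMk ihB)
  | bot => exact continuous_const

lemma compactness {Γ Δ : Set Fm} (h : Con Γ Δ) :
    ∃ Γ' Δ' : Finset Fm, ↑Γ' ⊆ Γ ∧ ↑Δ' ⊆ Δ ∧ ConB Γ' Δ' := by
  classical
  set Z : ↥Γ ⊕ ↥Δ → Set (ℕ → V4) := fun i =>
    match i with
    | .inl A => {v | dsg v A.1 = true}
    | .inr B => {v | dsg v B.1 = false} with hZ
  have hZc : ∀ i, IsClosed (Z i) := by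
    rintro (A | B)
    · have : Z (.inl A) = (fun v => val v A.1) ⁻¹' {x : V4 | x.hasT = true} := rfl
      rw [this]
      exact (isClosed_discrete _).preimage (cont_val _)
    · have : Z (.inr B) = (fun v => val v B.1) ⁻¹' {x : V4 | x.hasT = false} := rfl
      rw [this]
      exact (isClosed_discrete _).preimage (cont_val _)
  have hempty : (Set.univ ∩ ⋂ i, Z i) = ∅ := by
    rw [Set.eq_empty_iff_forall_notMem]
    intro v hv
    rw [Set.mem_inter_iff, Set.mem_iInter] at hv
    obtain ⟨B, hB, hBd⟩ :=
      h v (fun A hA => (desig_iff _).mpr (hv.2 (.inl ⟨A, hA⟩)))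
    have hfalse : (val v B).hasT = false := hv.2 (.inr ⟨B, hB⟩)
    rw [desig_iff, hfalse] at hBd
    exact Bool.noConfusion hBd
  obtain ⟨t, ht⟩ := IsCompact.elim_finite_subfamily_closed isCompact_univ Z hZc hempty
  set g : ↥Γ ⊕ ↥Δ → Fm := Sum.elim Subtype.val Subtype.val with hg
  refine ⟨(t.filter (fun i => i.isLeft = true)).image g,
    (t.filter (fun i => i.isRight = true)).image g, ?_, ?_, ?_⟩
  · intro x hx
    rw [Finset.coe_image, Set.mem_image] at hx
    obtain ⟨i, hi, rfl⟩ := hx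
    rw [Finset.mem_coe, Finset.mem_filter] at hi
    rcases i with A | B
    · exact A.2
    · exact absurd hi.2 (by simp)
  · intro x hx
    rw [Finset.coe_image, Set.mem_image] at hx
    obtain ⟨i, hi, rfl⟩ := hx
    rw [Finset.mem_coe, Finset.mem_filter] at hi
    rcases i with A | B
    · exact absurd hi.2 (by simp)
    · exact B.2
  · intro v hv
    by_contra hnc
    push_neg at hnc
    have hvmem : v ∈ Set.univ ∩ ⋂ i ∈ t, Z i := by
      refine ⟨trivial, ?_⟩
      rw [Set.mem_iInter₂]
      rintro (A | B) hi
      · exact hv (g (.inl A))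
          (Finset.mem_image.mpr ⟨.inl A, Finset.mem_filter.mpr ⟨hi, rfl⟩, rfl⟩)
      · have hBmem : g (.inr B) ∈ (t.filter (fun i => i.isRight = true)).image g :=
          Finset.mem_image.mpr ⟨.inr B, Finset.mem_filter.mpr ⟨hi, rfl⟩, rfl⟩
        have hne : dsg v B.1 ≠ true := hnc (g (.inr B)) hBmem
        show dsg v B.1 = false
        exact Bool.eq_false_iff.mpr hne
    rw [ht] at hvmem
    exact hvmem
end Compactness

/-- the sequent calculus proof system for BD^{→,⊥} is sound and
complete with respect to the consequence relation of BD^{→,⊥}: `Γ ⊨ Δ` iff some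
sequent `Γ' ⊢ Δ'` with `Γ'` a finite subset of `Γ` and `Δ'` a finite subset of
`Δ` is provable. -/
theorem stmt18 :
    ∀ Γ Δ : Set Fm, Con Γ Δ ↔
      ∃ Γ' Δ' : Finset Fm, ↑Γ' ⊆ Γ ∧ ↑Δ' ⊆ Δ ∧ Provable Γ' Δ' := by
  intro Γ Δ
  constructor
  · intro h
    obtain ⟨Γ', Δ', h1, h2, h3⟩ := compactness h
    exact ⟨Γ', Δ', h1, h2, complete_aux (W Γ' Δ') Γ' Δ' le_rfl h3⟩
  · rintro ⟨Γ', Δ', h1, h2, h3⟩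
    intro v hv
    obtain ⟨B, hB, hBd⟩ := sound h3 v
      (fun A hA => (desig_iff _).mp (hv A (h1 (Finset.mem_coe.mpr hA))))
    exact ⟨B, h2 (Finset.mem_coe.mpr hB), (desig_iff _).mpr hBd⟩

end BD18
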